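/- Assume 1 ≥ b_1 ≥ … ≥ b_m ≥ 0, let x ∈ M_n(b) and let f : 𝓛^n → ℝ be fibrewise supermodular. For 0 ≤ k ≤ n set y_k(λ_1,…,λ_k) = Σ_{(τ_{k+1},…,τ_n)} x(λ_1,…,λ_k,τ_{k+1},…,τ_n) and define x^{(k)} : 𝓛^n → ℝ by x^{(k)}(λ_1,…,λ_n) = y_k(λ_1,…,λ_k)·q*(λ_{k+1})⋯q*(λ_n). Then for every 0 ≤ k < n one has E_{x^{(k+1)}}(f) ≤ E_{x^{(k)}}(f), where E_z(f) = Σ_{λ∈𝓛^n} f(λ)z(λ). -/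
import Mathlib


noncomputable section

open Finset

/-- `ℓ_i` : indicator of `i ∈ S`. -/
def ell {m : ℕ} (i : Fin m) (S : Finset (Fin m)) : ℝ := if i ∈ S then 1 else 0

/-- `μ_j = {1,…,j}` (the first `j` elements of `Fin m`). -/
def mu (m j : ℕ) : Finset (Fin m) := Finset.univ.filter fun i => (i : ℕ) < j

/-- paper `b_j` for `j = 0,…,m`, with `b_0 = 1` (and `0` beyond `m`). -/
def bpaper {m : ℕ} (b : Fin m → ℝ) (j : ℕ) : ℝ :=
  if j = 0 then 1 else if h : j - 1 < m then b ⟨j - 1, h⟩ else 0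

/-- the upper supermodular vertex measure `q*`:
`q*(μ_j) = b_j − b_{j+1}` for `0 ≤ j ≤ m−1`, `q*(μ_m) = b_m`, and `q* = 0` elsewhere. -/
def qStar {m : ℕ} (b : Fin m → ℝ) (S : Finset (Fin m)) : ℝ :=
  ∑ j ∈ Finset.range (m + 1), if S = mu m j then bpaper b j - bpaper b (j + 1) else 0

/-- the lower supermodular vertex measure `q_*`:
`q_*(∅) = 1 − Σᵢ bᵢ`, `q_*({i}) = bᵢ`, and `q_* = 0` elsewhere. -/
def qLow {m : ℕ} (b : Fin m → ℝ) (S : Finset (Fin m)) : ℝ :=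
  if S = ∅ then 1 - ∑ i, b i else ∑ i : Fin m, if S = {i} then b i else 0

/-- membership in `M_1(b)`: a probability function with `E_x(ℓ_i) = b_i` for all `i`. -/
def MemM1 {m : ℕ} (b : Fin m → ℝ) (x : Finset (Fin m) → ℝ) : Prop :=
  (∀ S, 0 ≤ x S) ∧ (∑ S, x S = 1) ∧ (∀ i, ∑ S, ell i S * x S = b i)

/-- membership in `M_n(b)`: a probability function on `𝓛^n` satisfying, for every step `k`,
every prefix `λ` and every `i`, the conditional moment condition. -/
def MemMn {m n : ℕ} (b : Fin m → ℝ) (x : (Fin n → Finset (Fin m)) → ℝ) : Prop :=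
  (∀ ω, 0 ≤ x ω) ∧ (∑ ω, x ω = 1) ∧
  (∀ (k : Fin n) (lam : Fin n → Finset (Fin m)) (i : Fin m),
    (∑ ω, if ∀ j : Fin n, j < k → ω j = lam j then ell i (ω k) * x ω else 0) =
      b i * ∑ ω, if ∀ j : Fin n, j < k → ω j = lam j then x ω else 0)

/-- supermodular function on `𝓛`. -/
def Supermod {m : ℕ} (f : Finset (Fin m) → ℝ) : Prop :=
  ∀ S T, f S + f T ≤ f (S ∪ T) + f (S ∩ T)

/-- fibrewise supermodular function on `𝓛^n`. -/
def FibSupermod {m n : ℕ} (f : (Fin n → Finset (Fin m)) → ℝ) : Prop :=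
  ∀ (k : Fin n) (lam : Fin n → Finset (Fin m)),
    Supermod fun S => f (Function.update lam k S)

/-- the product measure `q^{⊗n}`. -/
def prodM {m n : ℕ} (q : Finset (Fin m) → ℝ) (ω : Fin n → Finset (Fin m)) : ℝ :=
  ∏ k, q (ω k)

/-- `y_k` : the mass that `x` gives to the cylinder determined by the first `k`
coordinates of `ω`. -/
def yk {m n : ℕ} (x : (Fin n → Finset (Fin m)) → ℝ) (k : ℕ)
    (ω : Fin n → Finset (Fin m)) : ℝ :=
  ∑ ω' : Fin n → Finset (Fin m),
    if ∀ j : Fin n, (j : ℕ) < k → ω' j = ω j then x ω' else 0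

/-- `x^{(k)}(λ₁,…,λ_n) = y_k(λ₁,…,λ_k)·q*(λ_{k+1})⋯q*(λ_n)`. -/
def xkUp {m n : ℕ} (b : Fin m → ℝ) (x : (Fin n → Finset (Fin m)) → ℝ) (k : ℕ)
    (ω : Fin n → Finset (Fin m)) : ℝ :=
  yk x k ω * ∏ j : Fin n, if k ≤ (j : ℕ) then qStar b (ω j) else 1

section Aux

variable {m : ℕ}

lemma mem_mu {j : ℕ} {i : Fin m} : i ∈ mu m j ↔ (i : ℕ) < j := by
  simp [mu]

lemma bpaper_zero (b : Fin m → ℝ) : bpaper b 0 = 1 := rfl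

lemma bpaper_succ (b : Fin m → ℝ) (i : Fin m) : bpaper b ((i : ℕ) + 1) = b i := by
  simp [bpaper, i.isLt]

lemma bpaper_top (b : Fin m → ℝ) : bpaper b (m + 1) = 0 := by
  simp [bpaper]

lemma bpaper_antitone (b : Fin m → ℝ)
    (hmono : ∀ i j : Fin m, i ≤ j → b j ≤ b i)
    (hb1 : ∀ i, b i ≤ 1) (hb0 : ∀ i, 0 ≤ b i) (j : ℕ) :
    bpaper b (j + 1) ≤ bpaper b j := by
  unfold bpaper
  rw [if_neg (Nat.succ_ne_zero j)]
  rcases Nat.eq_zero_or_pos j with rfl | hj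
  · rw [if_pos rfl]
    simp only [Nat.add_sub_cancel]
    split_ifs with h
    · exact hb1 _
    · norm_num
  · rw [if_neg (by omega)]
    split_ifs with h1 h2 h2
    · exact hmono ⟨j - 1, h2⟩ ⟨j + 1 - 1, h1⟩ (by simp only [Fin.le_def]; omega)
    · omega
    · exact hb0 _
    · exact le_rfl

lemma qStar_nonneg (b : Fin m → ℝ)
    (hmono : ∀ i j : Fin m, i ≤ j → b j ≤ b i)
    (hb1 : ∀ i, b i ≤ 1) (hb0 : ∀ i, 0 ≤ b i) (S : Finset (Fin m)) :
    0 ≤ qStar b S := by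
  apply Finset.sum_nonneg
  intro j _
  split_ifs
  · linarith [bpaper_antitone b hmono hb1 hb0 j]
  · exact le_rfl

lemma abel_id (B G : ℕ → ℝ) (M : ℕ) :
    ∑ j ∈ Finset.range (M + 1), (B j - B (j + 1)) * G j
      = B 0 * G 0 - B (M + 1) * G M
        + ∑ j ∈ Finset.range M, B (j + 1) * (G (j + 1) - G j) := by
  induction M with
  | zero => simp; ring
  | succ M ih =>
      rw [Finset.sum_range_succ, ih, Finset.sum_range_succ]
      ring

end Aux

section Aux2

variable {m : ℕ}

lemma inter_mu_top (S : Finset (Fin m)) : S ∩ mu m m = S := by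
  ext i; simp [mem_mu, i.isLt]

lemma sup_bound (g : Finset (Fin m) → ℝ) (hg : Supermod g) (S : Finset (Fin m)) :
    g S ≤ g (mu m 0)
      + ∑ i : Fin m, if i ∈ S then g (mu m ((i : ℕ) + 1)) - g (mu m (i : ℕ)) else 0 := by
  have key : ∀ j, j ≤ m → g (S ∩ mu m j) ≤ g (mu m 0)
      + ∑ i : Fin m, if (i : ℕ) < j ∧ i ∈ S
          then g (mu m ((i : ℕ) + 1)) - g (mu m (i : ℕ)) else 0 := by
    intro j
    induction j with
    | zero =>
        intro _
        have h1 : S ∩ mu m 0 = mu m 0 := by ext i; simp [mem_mu]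
        rw [h1]
        simp
    | succ j ih =>
        intro hj1
        have hj : j < m := hj1
        have ihj := ih (le_of_lt hj)
        set i0 : Fin m := ⟨j, hj⟩ with hi0
        have hval : (i0 : ℕ) = j := rfl
        have hsum : (∑ i : Fin m, if (i : ℕ) < j + 1 ∧ i ∈ S
              then g (mu m ((i : ℕ) + 1)) - g (mu m (i : ℕ)) else 0)
            = (∑ i : Fin m, if (i : ℕ) < j ∧ i ∈ S
              then g (mu m ((i : ℕ) + 1)) - g (mu m (i : ℕ)) else 0)
              + (if i0 ∈ S then g (mu m (j + 1)) - g (mu m j) else 0) := by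
          have hper : ∀ i : Fin m,
              (if (i : ℕ) < j + 1 ∧ i ∈ S
                then g (mu m ((i : ℕ) + 1)) - g (mu m (i : ℕ)) else 0)
              = (if (i : ℕ) < j ∧ i ∈ S
                then g (mu m ((i : ℕ) + 1)) - g (mu m (i : ℕ)) else 0)
                + (if i = i0 then (if i0 ∈ S then g (mu m (j + 1)) - g (mu m j) else 0)
                    else 0) := by
            intro i
            by_cases hii : i = i0
            · rw [hii]
              simp only [hval]
              by_cases hS : i0 ∈ S <;> simp [hS, Nat.lt_succ_self, lt_irrefl]
            · have hne : (i : ℕ) ≠ j := fun e => hii (Fin.ext (e.trans hval.symm))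
              rw [if_neg hii, add_zero]
              exact if_congr (by constructor <;> rintro ⟨h1, h2⟩ <;>
                exact ⟨by omega, h2⟩) rfl rfl
          rw [Finset.sum_congr rfl fun i _ => hper i, Finset.sum_add_distrib,
            Finset.sum_ite_eq' Finset.univ i0]
          simp
        by_cases hS : i0 ∈ S
        · have hsup := hg (S ∩ mu m (j + 1)) (mu m j)
          have hu : (S ∩ mu m (j + 1)) ∪ mu m j = mu m (j + 1) := by
            ext i
            simp only [Finset.mem_union, Finset.mem_inter, mem_mu]
            constructor
            · rintro (⟨_, h2⟩ | h2) <;> omega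
            · intro h
              by_cases hij : (i : ℕ) < j
              · exact Or.inr hij
              · have he : i = i0 := Fin.ext (by rw [hval]; omega)
                exact Or.inl ⟨he ▸ hS, h⟩
          have hi' : (S ∩ mu m (j + 1)) ∩ mu m j = S ∩ mu m j := by
            ext i
            simp only [Finset.mem_inter, mem_mu]
            constructor
            · rintro ⟨⟨h1, _⟩, h3⟩; exact ⟨h1, h3⟩
            · rintro ⟨h1, h3⟩; exact ⟨⟨h1, by omega⟩, h3⟩
          rw [hu, hi'] at hsup
          rw [hsum, if_pos hS]
          linarith
        · have heq : S ∩ mu m (j + 1) = S ∩ mu m j := by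
            ext i
            simp only [Finset.mem_inter, mem_mu]
            constructor
            · rintro ⟨h1, h2⟩
              have hne : (i : ℕ) ≠ j := fun e => hS (Fin.ext (e.trans hval.symm) ▸ h1)
              exact ⟨h1, by omega⟩
            · rintro ⟨h1, h2⟩; exact ⟨h1, by omega⟩
          rw [heq, hsum, if_neg hS, add_zero]
          exact ihj
  have hfin := key m le_rfl
  rw [inter_mu_top] at hfin
  refine hfin.trans (le_of_eq ?_)
  congr 1
  refine Finset.sum_congr rfl fun i _ => ?_
  exact if_congr (by simp [i.isLt]) rfl rfl

lemma key_ineq (b : Fin m → ℝ)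
    (hmono : ∀ i j : Fin m, i ≤ j → b j ≤ b i)
    (hb1 : ∀ i, b i ≤ 1) (hb0 : ∀ i, 0 ≤ b i)
    (g : Finset (Fin m) → ℝ) (hg : Supermod g)
    (z : Finset (Fin m) → ℝ) (hz0 : ∀ S, 0 ≤ z S) (c : ℝ)
    (hzc : ∑ S, z S = c) (hzi : ∀ i, ∑ S, ell i S * z S = b i * c) :
    ∑ S, g S * z S ≤ c * ∑ S, g S * qStar b S := by
  have hq : ∑ S, g S * qStar b S
      = ∑ j ∈ Finset.range (m + 1), (bpaper b j - bpaper b (j + 1)) * g (mu m j) := by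
    unfold qStar
    simp_rw [Finset.mul_sum, mul_ite, mul_zero]
    rw [Finset.sum_comm]
    refine Finset.sum_congr rfl fun j _ => ?_
    rw [Finset.sum_ite_eq' Finset.univ (mu m j)
      (fun S => g S * (bpaper b j - bpaper b (j + 1)))]
    simp only [Finset.mem_univ, if_true]
    ring
  have step1 : ∑ S, g S * z S
      ≤ ∑ S, z S * (g (mu m 0)
          + ∑ i : Fin m, if i ∈ S then g (mu m ((i : ℕ) + 1)) - g (mu m (i : ℕ)) else 0) := by
    refine Finset.sum_le_sum fun S _ => ?_
    rw [mul_comm]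
    exact mul_le_mul_of_nonneg_left (sup_bound g hg S) (hz0 S)
  have expand : ∑ S, z S * (g (mu m 0)
        + ∑ i : Fin m, if i ∈ S then g (mu m ((i : ℕ) + 1)) - g (mu m (i : ℕ)) else 0)
      = (∑ S, z S) * g (mu m 0)
        + ∑ i : Fin m, (∑ S, ell i S * z S)
            * (g (mu m ((i : ℕ) + 1)) - g (mu m (i : ℕ))) := by
    simp_rw [mul_add, Finset.sum_add_distrib, Finset.mul_sum]
    congr 1
    · rw [Finset.sum_mul]
    · rw [Finset.sum_comm]
      refine Finset.sum_congr rfl fun i _ => ?_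
      rw [Finset.sum_mul]
      refine Finset.sum_congr rfl fun S _ => ?_
      by_cases h : i ∈ S <;> simp [ell, h]
  rw [expand, hzc] at step1
  simp_rw [hzi] at step1
  refine step1.trans (le_of_eq ?_)
  have hfin : ∑ i : Fin m, (b i * c) * (g (mu m ((i : ℕ) + 1)) - g (mu m (i : ℕ)))
      = ∑ j ∈ Finset.range m,
          (bpaper b (j + 1) * c) * (g (mu m (j + 1)) - g (mu m j)) := by
    rw [← Fin.sum_univ_eq_sum_range
      (fun j => (bpaper b (j + 1) * c) * (g (mu m (j + 1)) - g (mu m j))) m]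
    refine Finset.sum_congr rfl fun i _ => ?_
    rw [bpaper_succ]
  rw [hfin, hq, abel_id, bpaper_top, bpaper_zero]
  have : ∀ j ∈ Finset.range m,
      (bpaper b (j + 1) * c) * (g (mu m (j + 1)) - g (mu m j))
        = c * (bpaper b (j + 1) * (g (mu m (j + 1)) - g (mu m j))) := fun j _ => by ring
  rw [Finset.sum_congr rfl this, ← Finset.mul_sum]
  ring

end Aux2

section Aux3

variable {m n : ℕ}

lemma per_fiber (b : Fin m → ℝ)
    (hmono : ∀ i j : Fin m, i ≤ j → b j ≤ b i)
    (hb1 : ∀ i, b i ≤ 1) (hb0 : ∀ i, 0 ≤ b i)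
    (x : (Fin n → Finset (Fin m)) → ℝ) (hx : MemMn b x)
    (f : (Fin n → Finset (Fin m)) → ℝ) (hf : FibSupermod f)
    (k : ℕ) (hk : k < n) (w : Fin n → Finset (Fin m)) :
    ∑ S, f (Function.update w ⟨k, hk⟩ S) * xkUp b x (k + 1) (Function.update w ⟨k, hk⟩ S)
      ≤ ∑ S, f (Function.update w ⟨k, hk⟩ S) * xkUp b x k (Function.update w ⟨k, hk⟩ S) := by
  set kk : Fin n := ⟨k, hk⟩ with hkk
  have hkv : (kk : ℕ) = k := rfl
  set P : ℝ := ∏ j : Fin n, if k + 1 ≤ (j : ℕ) then qStar b (w j) else 1 with hP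
  have hP0 : 0 ≤ P := Finset.prod_nonneg fun j _ => by
    split_ifs
    · exact qStar_nonneg b hmono hb1 hb0 _
    · norm_num
  have hprod1 : ∀ S : Finset (Fin m),
      (∏ j : Fin n, if k + 1 ≤ (j : ℕ) then qStar b (Function.update w kk S j) else 1)
        = P := by
    intro S
    refine Finset.prod_congr rfl fun j _ => ?_
    by_cases hj : j = kk
    · subst hj
      rw [if_neg (by omega), if_neg (by omega)]
    · rw [Function.update_of_ne hj]
  have hprod2 : ∀ S : Finset (Fin m),
      (∏ j : Fin n, if k ≤ (j : ℕ) then qStar b (Function.update w kk S j) else 1)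
        = qStar b S * P := by
    intro S
    rw [← Finset.mul_prod_erase Finset.univ _ (Finset.mem_univ kk), hP,
      ← Finset.mul_prod_erase Finset.univ _ (Finset.mem_univ kk)]
    have h1 : (if k ≤ (kk : ℕ) then qStar b (Function.update w kk S kk) else 1)
        = qStar b S := by
      rw [if_pos (by omega), Function.update_self]
    have h2 : (if k + 1 ≤ (kk : ℕ) then qStar b (w kk) else 1) = 1 := by
      rw [if_neg (by omega)]
    rw [h1, h2, one_mul]
    refine congrArg _ (Finset.prod_congr rfl fun j hj => ?_)
    have hne : j ≠ kk := (Finset.mem_erase.mp hj).1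
    have hnv : (j : ℕ) ≠ k := fun e => hne (Fin.ext (e.trans hkv.symm))
    rw [Function.update_of_ne hne]
    exact if_congr (by omega) rfl rfl
  have hyk : ∀ S : Finset (Fin m), yk x k (Function.update w kk S) = yk x k w := by
    intro S
    unfold yk
    refine Finset.sum_congr rfl fun ω' _ => ?_
    refine if_congr ?_ rfl rfl
    constructor
    · intro h j hj
      have hne : j ≠ kk := fun e => by rw [e, hkv] at hj; omega
      rw [h j hj, Function.update_of_ne hne]
    · intro h j hj
      have hne : j ≠ kk := fun e => by rw [e, hkv] at hj; omega
      rw [Function.update_of_ne hne]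
      exact h j hj
  have hcond : ∀ (S : Finset (Fin m)) (ω' : Fin n → Finset (Fin m)),
      (∀ j : Fin n, (j : ℕ) < k + 1 → ω' j = Function.update w kk S j)
        ↔ ((∀ j : Fin n, j < kk → ω' j = w j) ∧ S = ω' kk) := by
    intro S ω'
    constructor
    · intro h
      constructor
      · intro j hj
        have hjv : (j : ℕ) < k := Fin.lt_def.mp hj
        have hne : j ≠ kk := Fin.ne_of_lt hj
        rw [h j (by omega), Function.update_of_ne hne]
      · have := h kk (by omega)
        rw [Function.update_self] at this
        exact this.symm
    · rintro ⟨h1, h2⟩ j hj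
      by_cases hje : j = kk
      · subst hje
        rw [Function.update_self]
        exact h2.symm
      · have hnv : (j : ℕ) ≠ k := fun e => hje (Fin.ext (e.trans hkv.symm))
        rw [Function.update_of_ne hje]
        exact h1 j (Fin.lt_def.mpr (by omega))
  have hA : ∀ ω' : Fin n → Finset (Fin m),
      (∀ j : Fin n, j < kk → ω' j = w j) ↔ (∀ j : Fin n, (j : ℕ) < k → ω' j = w j) := by
    intro ω'
    constructor
    · intro h j hj; exact h j (Fin.lt_def.mpr hj)
    · intro h j hj; exact h j (Fin.lt_def.mp hj)
  have hz0 : ∀ S : Finset (Fin m), 0 ≤ yk x (k + 1) (Function.update w kk S) := by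
    intro S
    refine Finset.sum_nonneg fun ω' _ => ?_
    split_ifs
    · exact hx.1 ω'
    · exact le_rfl
  have hzc : (∑ S : Finset (Fin m), yk x (k + 1) (Function.update w kk S)) = yk x k w := by
    unfold yk
    rw [Finset.sum_comm]
    refine Finset.sum_congr rfl fun ω' _ => ?_
    have hrw : ∀ S : Finset (Fin m),
        (if (∀ j : Fin n, (j : ℕ) < k + 1 → ω' j = Function.update w kk S j)
            then x ω' else 0)
        = if S = ω' kk then (if (∀ j : Fin n, j < kk → ω' j = w j) then x ω' else 0)
            else 0 := by
      intro S
      rw [if_congr (hcond S ω') rfl rfl]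
      by_cases h2 : S = ω' kk <;> simp [h2]
    rw [Finset.sum_congr rfl fun S _ => hrw S, Finset.sum_ite_eq' Finset.univ (ω' kk)]
    simp only [Finset.mem_univ, if_true]
    exact if_congr (hA ω') rfl rfl
  have hzi : ∀ i : Fin m,
      (∑ S : Finset (Fin m), ell i S * yk x (k + 1) (Function.update w kk S))
        = b i * yk x k w := by
    intro i
    have hmain := hx.2.2 kk w i
    have hL : (∑ S : Finset (Fin m), ell i S * yk x (k + 1) (Function.update w kk S))
        = ∑ ω', if ∀ j : Fin n, j < kk → ω' j = w j then ell i (ω' kk) * x ω' else 0 := by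
      unfold yk
      simp_rw [Finset.mul_sum]
      rw [Finset.sum_comm]
      refine Finset.sum_congr rfl fun ω' _ => ?_
      have hrw : ∀ S : Finset (Fin m),
          ell i S * (if (∀ j : Fin n, (j : ℕ) < k + 1 → ω' j = Function.update w kk S j)
              then x ω' else 0)
          = if S = ω' kk
              then (if (∀ j : Fin n, j < kk → ω' j = w j) then ell i (ω' kk) * x ω' else 0)
              else 0 := by
        intro S
        rw [if_congr (hcond S ω') rfl rfl]
        by_cases h2 : S = ω' kk
        · subst h2
          by_cases hA' : (∀ j : Fin n, j < kk → ω' j = w j) <;> simp [hA']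
        · simp [h2]
      rw [Finset.sum_congr rfl fun S _ => hrw S, Finset.sum_ite_eq' Finset.univ (ω' kk)]
      simp only [Finset.mem_univ, if_true]
    have hR : (∑ ω', if ∀ j : Fin n, j < kk → ω' j = w j then x ω' else 0) = yk x k w := by
      unfold yk
      exact Finset.sum_congr rfl fun ω' _ => if_congr (hA ω') rfl rfl
    rw [hL, hmain, hR]
  have hsup : Supermod (fun S => f (Function.update w kk S) * P) := by
    intro S T
    have h := mul_le_mul_of_nonneg_right (hf kk w S T) hP0
    dsimp only at h ⊢
    nlinarith [h]
  calc ∑ S, f (Function.update w kk S) * xkUp b x (k + 1) (Function.update w kk S)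
      = ∑ S : Finset (Fin m), (f (Function.update w kk S) * P)
          * yk x (k + 1) (Function.update w kk S) := by
        refine Finset.sum_congr rfl fun S _ => ?_
        simp only [xkUp]
        rw [hprod1 S]
        ring
    _ ≤ yk x k w * ∑ S : Finset (Fin m), (f (Function.update w kk S) * P) * qStar b S :=
        key_ineq b hmono hb1 hb0 _ hsup
          (fun S => yk x (k + 1) (Function.update w kk S)) hz0 _ hzc hzi
    _ = ∑ S, f (Function.update w kk S) * xkUp b x k (Function.update w kk S) := by
        rw [Finset.mul_sum]
        refine Finset.sum_congr rfl fun S _ => ?_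
        simp only [xkUp]
        rw [hyk S, hprod2 S]
        ring

end Aux3

/-- one-step improvement towards the product of upper supermodular vertex
measures: `E_{x^{(k+1)}}(f) ≤ E_{x^{(k)}}(f)` for fibrewise supermodular `f`. -/
theorem step_improvement {m n : ℕ} (hm : 0 < m) (hn : 0 < n) (b : Fin m → ℝ)
    (hmono : ∀ i j : Fin m, i ≤ j → b j ≤ b i)
    (hb1 : ∀ i, b i ≤ 1) (hb0 : ∀ i, 0 ≤ b i)
    (x : (Fin n → Finset (Fin m)) → ℝ) (hx : MemMn b x)
    (f : (Fin n → Finset (Fin m)) → ℝ) (hf : FibSupermod f)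
    (k : ℕ) (hk : k < n) :
    ∑ ω, f ω * xkUp b x (k + 1) ω ≤ ∑ ω, f ω * xkUp b x k ω := by
  classical
  set kk : Fin n := ⟨k, hk⟩ with hkk
  set e := Equiv.funSplitAt kk (Finset (Fin m)) with he
  have hupd : ∀ (S : Finset (Fin m)) (r : {j : Fin n // j ≠ kk} → Finset (Fin m)),
      e.symm (S, r) = Function.update (e.symm (∅, r)) kk S := by
    intro S r
    funext j
    by_cases h : j = kk
    · subst h
      simp [he, Equiv.funSplitAt, Function.update_self]
    · simp [he, Equiv.funSplitAt, Function.update_of_ne h, h]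
  have hsum : ∀ F : (Fin n → Finset (Fin m)) → ℝ,
      ∑ ω, F ω = ∑ r : {j : Fin n // j ≠ kk} → Finset (Fin m), ∑ S : Finset (Fin m),
        F (Function.update (e.symm (∅, r)) kk S) := by
    intro F
    rw [← Equiv.sum_comp e.symm F, Fintype.sum_prod_type, Finset.sum_comm]
    exact Finset.sum_congr rfl fun r _ => Finset.sum_congr rfl fun S _ => by rw [hupd]
  rw [hsum (fun ω => f ω * xkUp b x (k + 1) ω), hsum (fun ω => f ω * xkUp b x k ω)]
  exact Finset.sum_le_sum fun r _ =>
    per_fiber b hmono hb1 hb0 x hx f hf k hk (e.symm (∅, r))
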